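/- Let Y be a convex algebra, X a subalgebra of Y, and X_* a one-point extension of X. Let z be an element of Pri(X_*) that is Y-cancellable, and suppose there exist w in Y and q in (0,1) with qz + (1-q)* = qz + (1-q)w. Then px + (1-p)* = px + (1-p)w for every x in Pri(X_*) and p in (0,1), and every element of Adh(X_*) adheres to w in Y. -/

import Mathlib

/-- A convex algebra presented via binary convex combinations (Stone axioms).
`comb p x y` stands for `p x + (1-p) y`. -/
structure ConvexAlg (X : Type*) where
  comb : ℝ → X → X → X
  idem : ∀ p ∈ Set.Ioo (0:ℝ) 1, ∀ x, comb p x x = x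
  comm : ∀ p ∈ Set.Ioo (0:ℝ) 1, ∀ x y, comb p x y = comb (1-p) y x
  assoc : ∀ p ∈ Set.Ioo (0:ℝ) 1, ∀ q ∈ Set.Ioo (0:ℝ) 1, ∀ x y z,
    comb p (comb q x y) z = comb (p*q) x (comb (p*(1-q)/(1-p*q)) y z)

/-- `x` adheres to `y` : `p x + (1-p) y = y` for all `p ∈ (0,1)`. -/
def ConvexAlg.Adh {X : Type*} (A : ConvexAlg X) (x y : X) : Prop :=
  ∀ p ∈ Set.Ioo (0:ℝ) 1, A.comb p x y = y

def ConvexAlg.Cancellable {Y : Type*} (B : ConvexAlg Y) (z : Y) : Prop :=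
  ∀ x y : Y, ∀ p ∈ Set.Ioo (0:ℝ) 1, B.comb p x z = B.comb p y z → x = y

/-!
The point `*` acts like `w` because every mixture `c z + (1-c)(θ x + (1-θ) *)` can be regrouped
as `s x + (1-s)(q z + (1-q) *)`, with coefficients that depend only on `q` and `θ` and not on the
algebra. Computing the regrouped mixture once in `X_*` and once in `Y` (where `*` is replaced by
`w`) and cancelling `z` gives `θ x + (1-θ) * = θ x + (1-θ) w` when the left side lies in `X`,
and `w = θ x + (1-θ) w` when it is `*`. A point of `Pri(X_*)` never gets absorbed into `*`:
if `p x + (1-p) y = y` for one `p`, the set of such `p` is closed under `t ↦ p + (1-p) t` and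
downwards, hence is all of `(0,1)`.
-/

open Set

lemma one_sub_mem_Ioo_zero_one {a : ℝ} (ha : a ∈ Ioo (0:ℝ) 1) : 1 - a ∈ Ioo (0:ℝ) 1 :=
  ⟨by linarith [ha.2], by linarith [ha.1]⟩

lemma mul_mem_Ioo_zero_one {a b : ℝ} (ha : a ∈ Ioo (0:ℝ) 1) (hb : b ∈ Ioo (0:ℝ) 1) :
    a * b ∈ Ioo (0:ℝ) 1 :=
  ⟨mul_pos ha.1 hb.1, by nlinarith [ha.1, ha.2, hb.1, hb.2]⟩

lemma one_sub_pow_mem_Ioo_zero_one {a : ℝ} (ha : a ∈ Ioo (0:ℝ) 1) (n : ℕ) :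
    1 - (1 - a) ^ (n + 1) ∈ Ioo (0:ℝ) 1 :=
  one_sub_mem_Ioo_zero_one
    ⟨pow_pos (one_sub_mem_Ioo_zero_one ha).1 _,
      pow_lt_one₀ (one_sub_mem_Ioo_zero_one ha).1.le (one_sub_mem_Ioo_zero_one ha).2 n.succ_ne_zero⟩

namespace ConvexAlg

variable {T : Type*} (A : ConvexAlg T)

theorem comb_comb_self_right {p q : ℝ} (hp : p ∈ Ioo (0:ℝ) 1) (hq : q ∈ Ioo (0:ℝ) 1)
    (x y : T) : A.comb p (A.comb q x y) y = A.comb (p * q) x y := by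
  have hpq : p * q < 1 := (mul_mem_Ioo_zero_one hp hq).2
  have hr : p * (1 - q) / (1 - p * q) ∈ Ioo (0:ℝ) 1 :=
    ⟨div_pos (mul_pos hp.1 (by linarith [hq.2])) (by linarith),
      (div_lt_one (by linarith)).2 (by nlinarith [hp.2, hq.1, hq.2])⟩
  rw [A.assoc p hp q hq, A.idem _ hr]

theorem comb_self_comb_left {p q : ℝ} (hp : p ∈ Ioo (0:ℝ) 1) (hq : q ∈ Ioo (0:ℝ) 1)
    (x y : T) : A.comb p x (A.comb q x y) = A.comb (p + (1 - p) * q) x y := by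
  have h1p := one_sub_mem_Ioo_zero_one hp
  have h1q := one_sub_mem_Ioo_zero_one hq
  rw [A.comm p hp, A.comm q hq, A.comb_comb_self_right h1p h1q,
    A.comm _ (mul_mem_Ioo_zero_one h1p h1q)]
  congr 1
  ring

theorem comb_one_sub_pow_eq {p : ℝ} (hp : p ∈ Ioo (0:ℝ) 1) {x y : T}
    (h : A.comb p x y = y) (n : ℕ) : A.comb (1 - (1 - p) ^ (n + 1)) x y = y := by
  induction n with
  | zero => simpa using h
  | succ n ih =>
    rw [show 1 - (1 - p) ^ (n + 1 + 1) = p + (1 - p) * (1 - (1 - p) ^ (n + 1)) by ring,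
      ← A.comb_self_comb_left hp (one_sub_pow_mem_Ioo_zero_one hp n), ih, h]

theorem adh_of_comb_eq {p : ℝ} (hp : p ∈ Ioo (0:ℝ) 1) {x y : T} (h : A.comb p x y = y) :
    A.Adh x y := by
  intro s hs
  obtain ⟨n, hn⟩ := exists_pow_lt_of_lt_one (sub_pos.2 hs.2) (by linarith [hp.1] : 1 - p < 1)
  have ht := one_sub_pow_mem_Ioo_zero_one hp n
  set t := 1 - (1 - p) ^ (n + 1) with ht_def
  have hst : s < t := by
    have : (1 - p) ^ (n + 1) ≤ (1 - p) ^ n :=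
      pow_le_pow_of_le_one (by linarith [hp.2]) (by linarith [hp.1]) n.le_succ
    linarith
  have hst' : s / t ∈ Ioo (0:ℝ) 1 := ⟨div_pos hs.1 ht.1, (div_lt_one ht.1).2 hst⟩
  calc A.comb s x y = A.comb (s / t) (A.comb t x y) y := by
        rw [A.comb_comb_self_right hst' ht, div_mul_cancel₀ _ ht.1.ne']
    _ = y := by rw [ht_def, A.comb_one_sub_pow_eq hp h, A.idem _ hst']

theorem Cancellable.comb_left_cancel {z : T} (hz : A.Cancellable z) {p : ℝ}
    (hp : p ∈ Ioo (0:ℝ) 1) {x y : T} (h : A.comb p z x = A.comb p z y) : x = y := by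
  rw [A.comm p hp, A.comm p hp] at h
  exact hz x y _ (one_sub_mem_Ioo_zero_one hp) h

end ConvexAlg

theorem exists_comb_comb_swap {q r : ℝ} (hq : q ∈ Ioo (0:ℝ) 1) (hr : r ∈ Ioo (0:ℝ) 1) :
    ∃ p ∈ Ioo (0:ℝ) 1, ∃ s ∈ Ioo (0:ℝ) 1, ∀ {T : Type*} (A : ConvexAlg T) (a b d : T),
      A.comb p a (A.comb r b d) = A.comb s b (A.comb q a d) := by
  obtain ⟨hq0, hq1⟩ := hq
  obtain ⟨hr0, hr1⟩ := hr
  have hqr : 0 < 1 - q * r := by nlinarith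
  have hp : q * (1 - r) / (1 - q * r) ∈ Ioo (0:ℝ) 1 :=
    ⟨div_pos (by nlinarith) hqr, (div_lt_one hqr).2 (by nlinarith)⟩
  have hs : r * (1 - q) / (1 - q * r) ∈ Ioo (0:ℝ) 1 :=
    ⟨div_pos (by nlinarith) hqr, (div_lt_one hqr).2 (by nlinarith)⟩
  refine ⟨_, hp, _, hs, fun A a b d => ?_⟩
  have hs_eq : (1 - q * (1 - r) / (1 - q * r)) * r = r * (1 - q) / (1 - q * r) := by
    field_simp
    ring
  have hq_eq : (1 - q * (1 - r) / (1 - q * r)) * (1 - r)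
      / (1 - (1 - q * (1 - r) / (1 - q * r)) * r) = 1 - q := by
    rw [hs_eq, div_eq_iff (one_sub_mem_Ioo_zero_one hs).1.ne']
    field_simp
    ring
  rw [A.comm _ hp a, A.assoc _ (one_sub_mem_Ioo_zero_one hp) r ⟨hr0, hr1⟩, hq_eq, hs_eq,
    ← A.comm q ⟨hq0, hq1⟩]

section OnePointExtension

variable {Y : Type*} {B : ConvexAlg Y} {X : Set Y}
  {hX : ∀ p ∈ Ioo (0:ℝ) 1, ∀ a ∈ X, ∀ b ∈ X, B.comb p a b ∈ X}
  {E : ConvexAlg (Option {y : Y // y ∈ X})} {z : {y : Y // y ∈ X}} {w : Y} {q : ℝ}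

theorem exists_comb_comb_star_eq
    (hcomp : ∀ p, ∀ hp : p ∈ Ioo (0:ℝ) 1, ∀ a b : {y : Y // y ∈ X},
      E.comb p (some a) (some b) = some ⟨B.comb p a b, hX p hp a a.2 b b.2⟩)
    (hq : q ∈ Ioo (0:ℝ) 1)
    (hqw : ∃ v : {y : Y // y ∈ X}, E.comb q (some z) none = some v ∧ (v : Y) = B.comb q z.1 w)
    (x : {y : Y // y ∈ X}) {θ : ℝ} (hθ : θ ∈ Ioo (0:ℝ) 1) :
    ∃ c ∈ Ioo (0:ℝ) 1, ∃ v : {y : Y // y ∈ X},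
      E.comb c (some z) (E.comb θ (some x) none) = some v ∧
        (v : Y) = B.comb c z.1 (B.comb θ x.1 w) := by
  obtain ⟨v, hv, hvw⟩ := hqw
  obtain ⟨c, hc, s, hs, hswap⟩ := exists_comb_comb_swap hq hθ
  refine ⟨c, hc, _, by rw [hswap E, hv, hcomp s hs], ?_⟩
  rw [hswap B, ← hvw]

theorem comb_star_eq_of_eq_some
    (hcomp : ∀ p, ∀ hp : p ∈ Ioo (0:ℝ) 1, ∀ a b : {y : Y // y ∈ X},
      E.comb p (some a) (some b) = some ⟨B.comb p a b, hX p hp a a.2 b b.2⟩)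
    (hzCan : B.Cancellable z.1) (hq : q ∈ Ioo (0:ℝ) 1)
    (hqw : ∃ v : {y : Y // y ∈ X}, E.comb q (some z) none = some v ∧ (v : Y) = B.comb q z.1 w)
    {x u : {y : Y // y ∈ X}} {θ : ℝ} (hθ : θ ∈ Ioo (0:ℝ) 1)
    (hu : E.comb θ (some x) none = some u) : (u : Y) = B.comb θ x.1 w := by
  obtain ⟨c, hc, v, hv, hvw⟩ := exists_comb_comb_star_eq hcomp hq hqw x hθ
  rw [hu, hcomp c hc, Option.some_inj] at hv
  rw [← hv] at hvw
  exact hzCan.comb_left_cancel B hc hvw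

end OnePointExtension

/-- uniqueness lemma: let `B` be a convex algebra on `Y`, `X ⊆ Y` a
subalgebra, and `E` a one-point extension of the subalgebra on `X` (the new point
being `none`). If `z ∈ Pri(E)` is `Y`-cancellable and `q z + (1-q) * = q z + (1-q) w`
for some `w ∈ Y` and `q ∈ (0,1)`, then `p x + (1-p) * = p x + (1-p) w` for every
`x ∈ Pri(E)` and `p ∈ (0,1)`, and every element of `Adh(E)` adheres to `w` in `Y`. -/
theorem uniqueness_lemma {Y : Type*} (B : ConvexAlg Y) (X : Set Y)
    (hX : ∀ p ∈ Set.Ioo (0:ℝ) 1, ∀ a ∈ X, ∀ b ∈ X, B.comb p a b ∈ X)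
    (E : ConvexAlg (Option {y : Y // y ∈ X}))
    (hcomp : ∀ p, ∀ hp : p ∈ Set.Ioo (0:ℝ) 1, ∀ a b : {y : Y // y ∈ X},
      E.comb p (some a) (some b) = some ⟨B.comb p a b, hX p hp a a.2 b b.2⟩)
    (z : {y : Y // y ∈ X}) (hzPri : ¬ E.Adh (some z) none)
    (hzCan : B.Cancellable z.1)
    (w : Y) (q : ℝ) (hq : q ∈ Set.Ioo (0:ℝ) 1)
    (hqw : ∃ v : {y : Y // y ∈ X},
      E.comb q (some z) none = some v ∧ (v : Y) = B.comb q z.1 w) :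
    (∀ x : {y : Y // y ∈ X}, ¬ E.Adh (some x) none →
      ∀ p ∈ Set.Ioo (0:ℝ) 1, ∃ v : {y : Y // y ∈ X},
        E.comb p (some x) none = some v ∧ (v : Y) = B.comb p x.1 w) ∧
    (∀ x : {y : Y // y ∈ X}, E.Adh (some x) none → B.Adh x.1 w) := by
  have hPri : ∀ x : {y : Y // y ∈ X}, ¬ E.Adh (some x) none →
      ∀ p ∈ Set.Ioo (0:ℝ) 1, ∃ v : {y : Y // y ∈ X},
        E.comb p (some x) none = some v ∧ (v : Y) = B.comb p x.1 w := by
    intro x hx p hp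
    obtain ⟨u, hu⟩ := Option.ne_none_iff_exists'.mp fun h => hx (E.adh_of_comb_eq hp h)
    exact ⟨u, hu, comb_star_eq_of_eq_some hcomp hzCan hq hqw hp hu⟩
  refine ⟨hPri, fun x hx θ hθ => ?_⟩
  obtain ⟨c, hc, v, hv, hvw⟩ := exists_comb_comb_star_eq hcomp hq hqw x hθ
  obtain ⟨v', hv', hv'w⟩ := hPri z hzPri c hc
  rw [hx θ hθ, hv', Option.some_inj] at hv
  rw [← hv, hv'w] at hvw
  exact (hzCan.comb_left_cancel B hc hvw).symm
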